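/- The inner derivations dual to the frame are implemented by the elements λ_a: in any algebra B as in the context, setting λ_1 := h^{-1} q Λ u x^3, λ_2 := −h^{-1} q^{1/2} Λ u ρ, λ_3 := −h^{-1} Λ u x^1, and letting E be the two-sided inverse of the frame matrix M, one has the commutator identity λ_a x^i − x^i λ_a = q Λ E^i_a for all a, i ∈ {1, 2, 3}. -/

import Mathlib

noncomputable section

/-- The FRT R-matrix of `SO_q(3)`: `Rfrt q i j k l = R^{ij}_{kl}`, with indices
`0, 1, 2` corresponding to `(−, 0, +)` (i.e. to `1, 2, 3`). -/
def Rfrt (q : ℝ) (i j k l : Fin 3) : ℂ :=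
  let Q : ℂ := (q : ℂ)
  let s : ℂ := (Real.sqrt q : ℂ)
  match i.1, j.1, k.1, l.1 with
  | 0,0,0,0 => Q                        -- R^{11}_{11} = q
  | 2,2,2,2 => Q                        -- R^{33}_{33} = q
  | 1,1,1,1 => 1                        -- R^{22}_{22} = 1
  | 0,1,0,1 => 1                        -- R^{12}_{12} = 1
  | 1,0,1,0 => 1                        -- R^{21}_{21} = 1
  | 1,2,1,2 => 1                        -- R^{23}_{23} = 1
  | 2,1,2,1 => 1                        -- R^{32}_{32} = 1
  | 0,2,0,2 => Q⁻¹                      -- R^{13}_{13} = q⁻¹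
  | 2,0,2,0 => Q⁻¹                      -- R^{31}_{31} = q⁻¹
  | 1,0,0,1 => Q - Q⁻¹                  -- R^{21}_{12} = q − q⁻¹
  | 2,1,1,2 => Q - Q⁻¹                  -- R^{32}_{23} = q − q⁻¹
  | 2,0,0,2 => (Q - Q⁻¹) * (1 - Q⁻¹)    -- R^{31}_{13} = (q − q⁻¹)(1 − q⁻¹)
  | 1,1,0,2 => -(Q - Q⁻¹) * s⁻¹         -- R^{22}_{13} = −(q − q⁻¹) q^{-1/2}
  | 2,0,1,1 => -(Q - Q⁻¹) * s⁻¹         -- R^{31}_{22} = −(q − q⁻¹) q^{-1/2}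
  | _,_,_,_ => 0

/-- The braid matrix `R̂` of `SO_q(3)`, as a linear endomorphism (matrix) of `ℂ³ ⊗ ℂ³`:
`R̂^{ij}_{kl} = R^{ji}_{kl}`, with row index the pair `(i,j)` and column index `(k,l)`. -/
def Rhat (q : ℝ) : Matrix (Fin 3 × Fin 3) (Fin 3 × Fin 3) ℂ :=
  fun p r => Rfrt q p.2 p.1 r.1 r.2

/-- Data of an extended quantum Euclidean space inside a unital associative `ℂ`-algebra
`B`: coordinates `x^i`, differentials `ξ^i`, the dilatation `Λ` with inverse `Λi`, the
inverse `u` of `x²`, and the radius `ρ` with inverse `ρi`, subject to the defining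
relations (indices `0, 1, 2` correspond to `1, 2, 3`, i.e. to `(−, 0, +)`). -/
structure QSpace (q : ℝ) (B : Type*) [Ring B] [Algebra ℂ B] where
  x : Fin 3 → B
  ξ : Fin 3 → B
  Λ : B
  Λi : B
  u : B
  ρ : B
  ρi : B
  rel_x12 : x 0 * x 1 = (q : ℂ) • (x 1 * x 0)
  rel_x32 : x 2 * x 1 = ((q : ℂ))⁻¹ • (x 1 * x 2)
  rel_x31 : x 2 * x 0 - x 0 * x 2 = ((Real.sqrt q - (Real.sqrt q)⁻¹ : ℝ) : ℂ) • (x 1 * x 1)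
  rel_xξ : ∀ i j : Fin 3,
    x i * ξ j = (q : ℂ) • ∑ k : Fin 3, ∑ l : Fin 3, Rhat q (i, j) (k, l) • (ξ k * x l)
  rel_ΛΛi : Λ * Λi = 1
  rel_ΛiΛ : Λi * Λ = 1
  rel_xΛ : ∀ i : Fin 3, x i * Λ = (q : ℂ) • (Λ * x i)
  rel_ξΛ : ∀ i : Fin 3, ξ i * Λ = (q : ℂ) • (Λ * ξ i)
  rel_ux : u * x 1 = 1
  rel_xu : x 1 * u = 1
  rel_ρρi : ρ * ρi = 1
  rel_ρiρ : ρi * ρ = 1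
  rel_ρx : ∀ i : Fin 3, ρ * x i = x i * ρ
  rel_ρξ : ∀ i : Fin 3, ρ * ξ i = (q : ℂ) • (ξ i * ρ)
  rel_ρsq : ρ * ρ = (Real.sqrt q : ℂ) • (x 2 * x 0) + x 1 * x 1 +
    ((Real.sqrt q : ℂ))⁻¹ • (x 0 * x 2)

/-- The frame matrix `M = ‖θ^a_i‖`:
`M¹₁ = u`, `M²₁ = q^{1/2}(q+1) ρ⁻¹ u x³`, `M²₂ = ρ⁻¹`,
`M³₁ = −q^{3/2}(q+1) ρ⁻² u (x³)²`, `M³₂ = −(q+1) ρ⁻² x³`, `M³₃ = ρ⁻² x²`,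
all other entries zero. -/
def Mmat {q : ℝ} {B : Type*} [Ring B] [Algebra ℂ B] (D : QSpace q B) (a i : Fin 3) : B :=
  match a.1, i.1 with
  | 0, 0 => D.u
  | 1, 0 => ((Real.sqrt q * (q + 1) : ℝ) : ℂ) • (D.ρi * D.u * D.x 2)
  | 1, 1 => D.ρi
  | 2, 0 => -(((Real.sqrt q * q * (q + 1) : ℝ)) : ℂ) • (D.ρi * D.ρi * D.u * (D.x 2 * D.x 2))
  | 2, 1 => -(((q + 1 : ℝ)) : ℂ) • (D.ρi * D.ρi * D.x 2)
  | 2, 2 => D.ρi * D.ρi * D.x 1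
  | _, _ => 0

/-- The frame one-forms `θ^a = Λ⁻¹ Σ_i M^a_i ξ^i`. -/
def theta {q : ℝ} {B : Type*} [Ring B] [Algebra ℂ B] (D : QSpace q B) (a : Fin 3) : B :=
  D.Λi * ∑ i : Fin 3, Mmat D a i * D.ξ i

/-- The elements `λ_a` implementing the inner derivations dual to the frame:
`λ₁ = h⁻¹ q Λ u x³`, `λ₂ = −h⁻¹ q^{1/2} Λ u ρ`, `λ₃ = −h⁻¹ Λ u x¹`,
where `h = q^{1/2} − q^{-1/2}`. -/
def lam {q : ℝ} {B : Type*} [Ring B] [Algebra ℂ B] (D : QSpace q B) (a : Fin 3) : B :=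
  match a.1 with
  | 0 => (((Real.sqrt q - (Real.sqrt q)⁻¹)⁻¹ * q : ℝ) : ℂ) • (D.Λ * D.u * D.x 2)
  | 1 => -(((Real.sqrt q - (Real.sqrt q)⁻¹)⁻¹ * Real.sqrt q : ℝ) : ℂ) • (D.Λ * D.u * D.ρ)
  | _ => -((((Real.sqrt q - (Real.sqrt q)⁻¹)⁻¹ : ℝ)) : ℂ) • (D.Λ * D.u * D.x 0)

/-! ### Auxiliary lemmas -/

namespace QSpace

variable {q : ℝ} {B : Type*} [Ring B] [Algebra ℂ B] (D : QSpace q B)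

private lemma trail {c : ℂ} {a b a' b' : B} (h : a * b = c • (a' * b')) (w : B) :
    a * (b * w) = c • (a' * (b' * w)) := by
  rw [← mul_assoc, h, smul_mul_assoc, mul_assoc]

private lemma trail_comm {a b : B} (h : a * b = b * a) (w : B) :
    a * (b * w) = b * (a * w) := by rw [← mul_assoc, h, mul_assoc]

private lemma trail_one {a b : B} (h : a * b = 1) (w : B) : a * (b * w) = w := by
  rw [← mul_assoc, h, one_mul]

lemma xΛ' (i : Fin 3) (w : B) : D.x i * (D.Λ * w) = (q : ℂ) • (D.Λ * (D.x i * w)) :=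
  trail (D.rel_xΛ i) w

lemma ρx' (i : Fin 3) (w : B) : D.ρ * (D.x i * w) = D.x i * (D.ρ * w) :=
  trail_comm (D.rel_ρx i) w

lemma ux1' (w : B) : D.u * (D.x 1 * w) = w := trail_one D.rel_ux w
lemma x1u' (w : B) : D.x 1 * (D.u * w) = w := trail_one D.rel_xu w
lemma ρiρ' (w : B) : D.ρi * (D.ρ * w) = w := trail_one D.rel_ρiρ w
lemma ρρi' (w : B) : D.ρ * (D.ρi * w) = w := trail_one D.rel_ρρi w

lemma x01' (w : B) : D.x 0 * (D.x 1 * w) = (q : ℂ) • (D.x 1 * (D.x 0 * w)) :=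
  trail D.rel_x12 w

lemma x21' (w : B) : D.x 2 * (D.x 1 * w) = ((q : ℂ))⁻¹ • (D.x 1 * (D.x 2 * w)) :=
  trail D.rel_x32 w

lemma x20 : D.x 2 * D.x 0 =
    D.x 0 * D.x 2 + ((Real.sqrt q - (Real.sqrt q)⁻¹ : ℝ) : ℂ) • (D.x 1 * D.x 1) := by
  have h := D.rel_x31
  rw [sub_eq_iff_eq_add] at h
  rw [h, add_comm]

lemma x20' (w : B) : D.x 2 * (D.x 0 * w) =
    D.x 0 * (D.x 2 * w) + ((Real.sqrt q - (Real.sqrt q)⁻¹ : ℝ) : ℂ) • (D.x 1 * (D.x 1 * w)) := by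
  rw [← mul_assoc, D.x20, add_mul, smul_mul_assoc, mul_assoc, mul_assoc]

lemma ux0 : D.u * D.x 0 = (q : ℂ) • (D.x 0 * D.u) := by
  have h1 : D.x 0 * D.x 1 * D.u = D.x 0 := by rw [mul_assoc, D.rel_xu, mul_one]
  calc D.u * D.x 0 = D.u * (D.x 0 * D.x 1 * D.u) := by rw [h1]
    _ = D.u * (((q : ℂ) • (D.x 1 * D.x 0)) * D.u) := by rw [D.rel_x12]
    _ = (q : ℂ) • (D.u * (D.x 1 * (D.x 0 * D.u))) := by
        rw [smul_mul_assoc, mul_smul_comm, mul_assoc]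
    _ = (q : ℂ) • (D.x 0 * D.u) := by rw [D.ux1']

lemma ux2 : D.u * D.x 2 = ((q : ℂ))⁻¹ • (D.x 2 * D.u) := by
  have h1 : D.x 2 * D.x 1 * D.u = D.x 2 := by rw [mul_assoc, D.rel_xu, mul_one]
  calc D.u * D.x 2 = D.u * (D.x 2 * D.x 1 * D.u) := by rw [h1]
    _ = D.u * ((((q : ℂ))⁻¹ • (D.x 1 * D.x 2)) * D.u) := by rw [D.rel_x32]
    _ = ((q : ℂ))⁻¹ • (D.u * (D.x 1 * (D.x 2 * D.u))) := by
        rw [smul_mul_assoc, mul_smul_comm, mul_assoc]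
    _ = ((q : ℂ))⁻¹ • (D.x 2 * D.u) := by rw [D.ux1']

lemma x0u (hq0 : (q : ℂ) ≠ 0) : D.x 0 * D.u = ((q : ℂ))⁻¹ • (D.u * D.x 0) := by
  rw [D.ux0, smul_smul, inv_mul_cancel₀ hq0, one_smul]

lemma x2u (hq0 : (q : ℂ) ≠ 0) : D.x 2 * D.u = (q : ℂ) • (D.u * D.x 2) := by
  rw [D.ux2, smul_smul, mul_inv_cancel₀ hq0, one_smul]

lemma x0u' (hq0 : (q : ℂ) ≠ 0) (w : B) :
    D.x 0 * (D.u * w) = ((q : ℂ))⁻¹ • (D.u * (D.x 0 * w)) := trail (D.x0u hq0) w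

lemma x2u' (hq0 : (q : ℂ) ≠ 0) (w : B) :
    D.x 2 * (D.u * w) = (q : ℂ) • (D.u * (D.x 2 * w)) := trail (D.x2u hq0) w

end QSpace

/-- Explicit formula for the inverse `E` of the frame matrix `M`. -/
def Finv {q : ℝ} {B : Type*} [Ring B] [Algebra ℂ B] (D : QSpace q B) (i a : Fin 3) : B :=
  match i.1, a.1 with
  | 0, 0 => D.x 1
  | 1, 0 => (-(((Real.sqrt q : ℝ) : ℂ))⁻¹ * ((q : ℂ) + 1)) • D.x 2
  | 1, 1 => D.ρ
  | 2, 0 => (-((Real.sqrt q : ℝ) : ℂ) * ((q : ℂ) + 1)) • (D.u * (D.x 2 * D.x 2))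
  | 2, 1 => ((q : ℂ) + 1) • (D.u * (D.x 2 * D.ρ))
  | 2, 2 => D.u * (D.ρ * D.ρ)
  | _, _ => 0

lemma MFinv {q : ℝ} (hq : 0 < q) {B : Type*} [Ring B] [Algebra ℂ B] (D : QSpace q B) :
    ∀ a b : Fin 3, (∑ i : Fin 3, Mmat D a i * Finv D i b) = if a = b then 1 else 0 := by
  have hq0 : (q : ℂ) ≠ 0 := by exact_mod_cast hq.ne'
  have hs0r : Real.sqrt q ≠ 0 := ne_of_gt (Real.sqrt_pos.mpr hq)
  have hs2 : ((Real.sqrt q : ℝ) : ℂ) * ((Real.sqrt q : ℝ) : ℂ) = (q : ℂ) := by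
    exact_mod_cast Real.mul_self_sqrt hq.le
  have hs0 : ((Real.sqrt q : ℝ) : ℂ) ≠ 0 := by exact_mod_cast hs0r
  intro a b
  fin_cases a <;> fin_cases b <;>
    simp only [Fin.sum_univ_three, Mmat, Finv, Fin.mk_zero, Fin.mk_one, Fin.val_zero, Fin.val_one, Fin.val_two,
      smul_mul_assoc, mul_smul_comm, smul_smul, mul_assoc,
      mul_add, add_mul, smul_add, neg_smul, smul_neg, neg_mul, mul_neg, neg_neg,
      mul_one, one_mul, mul_zero, zero_mul, add_zero, zero_add, smul_zero, zero_smul, one_smul,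
      D.rel_xΛ, D.xΛ', D.rel_ρx, D.ρx', D.rel_ux, D.ux1', D.rel_xu, D.x1u',
      D.rel_ρiρ, D.ρiρ', D.rel_ρρi, D.ρρi',
      D.rel_x12, D.x01', D.rel_x32, D.x21', D.x20, D.x20',
      D.x0u hq0, D.x0u' hq0, D.x2u hq0, D.x2u' hq0,
      if_true, if_false] <;>
    (try norm_num [Fin.ext_iff]) <;>
    (try (match_scalars <;> (push_cast; rw [← hs2]; field_simp [hs0]; ring)))
lemma E_eq_Finv {q : ℝ} (hq : 0 < q) {B : Type*} [Ring B] [Algebra ℂ B] (D : QSpace q B)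
    (E : Fin 3 → Fin 3 → B)
    (hE1 : ∀ i j : Fin 3, (∑ a : Fin 3, E i a * Mmat D a j) = if i = j then 1 else 0) :
    ∀ i a : Fin 3, E i a = Finv D i a := by
  intro i a
  have h1 : ∑ b : Fin 3, E i b * ∑ j : Fin 3, Mmat D b j * Finv D j a = E i a := by
    simp only [MFinv hq D, mul_ite, mul_one, mul_zero]
    simp
  rw [← h1]
  simp only [Finset.mul_sum, ← mul_assoc]
  rw [Finset.sum_comm]
  simp only [← Finset.sum_mul, hE1]
  simp
set_option maxHeartbeats 1000000 in
/-- The inner derivations dual to the frame are implemented by the `λ_a`: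
if `E` is the two-sided inverse of the frame matrix `M`, then
`λ_a x^i − x^i λ_a = q Λ E^i_a` for all `a, i`. -/
theorem lambda_inner_derivations (q : ℝ) (hq : 0 < q) (hq1 : q ≠ 1)
    {B : Type*} [Ring B] [Algebra ℂ B] (D : QSpace q B) (E : Fin 3 → Fin 3 → B)
    (hE1 : ∀ i j : Fin 3, (∑ a : Fin 3, E i a * Mmat D a j) = if i = j then 1 else 0)
    (hE2 : ∀ a b : Fin 3, (∑ i : Fin 3, Mmat D a i * E i b) = if a = b then 1 else 0) :
    ∀ a i : Fin 3, lam D a * D.x i - D.x i * lam D a = (q : ℂ) • (D.Λ * E i a) := by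
  have hq0 : (q : ℂ) ≠ 0 := by exact_mod_cast hq.ne'
  have hs0r : Real.sqrt q ≠ 0 := ne_of_gt (Real.sqrt_pos.mpr hq)
  have hs2 : ((Real.sqrt q : ℝ) : ℂ) * ((Real.sqrt q : ℝ) : ℂ) = (q : ℂ) := by
    exact_mod_cast Real.mul_self_sqrt hq.le
  have hs0 : ((Real.sqrt q : ℝ) : ℂ) ≠ 0 := by exact_mod_cast hs0r
  have hA : ((Real.sqrt q : ℝ) : ℂ) * ((Real.sqrt q : ℝ) : ℂ) - 1 ≠ 0 := by
    rw [hs2, sub_ne_zero]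
    exact_mod_cast hq1
  have hA' : ((Real.sqrt q : ℝ) : ℂ) ^ 2 - 1 ≠ 0 := by rw [pow_two]; exact hA
  have hkey : (((Real.sqrt q : ℝ) : ℂ) - (((Real.sqrt q : ℝ) : ℂ))⁻¹) * ((Real.sqrt q : ℝ) : ℂ) =
      ((Real.sqrt q : ℝ) : ℂ) * ((Real.sqrt q : ℝ) : ℂ) - 1 := by
    rw [sub_mul, inv_mul_cancel₀ hs0]
  have hsub0 : (((Real.sqrt q : ℝ) : ℂ) - (((Real.sqrt q : ℝ) : ℂ))⁻¹) ≠ 0 := by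
    intro h
    exact hA (by rw [← hkey, h, zero_mul])
  have hts : (((Real.sqrt q : ℝ) : ℂ) - (((Real.sqrt q : ℝ) : ℂ))⁻¹)⁻¹ =
      ((Real.sqrt q : ℝ) : ℂ) * (((Real.sqrt q : ℝ) : ℂ) * ((Real.sqrt q : ℝ) : ℂ) - 1)⁻¹ := by
    field_simp
    try rw [← hkey]
    try ring
  have key := E_eq_Finv hq D E hE1
  intro a i
  rw [key i a]
  fin_cases a <;> fin_cases i
  · show lam D 0 * D.x 0 - D.x 0 * lam D 0 = (q : ℂ) • (D.Λ * Finv D 0 0)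
    simp only [lam, Finv, Fin.mk_zero, Fin.mk_one, Fin.val_zero, Fin.val_one, Fin.val_two,
        smul_mul_assoc, mul_smul_comm, smul_smul, mul_assoc,
        mul_add, add_mul, smul_add, neg_smul, smul_neg, neg_mul, mul_neg, neg_neg,
        mul_one, one_mul, mul_zero, zero_mul, add_zero, zero_add, smul_zero, zero_smul, one_smul,
        D.rel_xΛ, D.xΛ', D.rel_ρx, D.ρx', D.rel_ux, D.ux1', D.rel_xu, D.x1u',
        D.rel_ρiρ, D.ρiρ', D.rel_ρρi, D.ρρi',
        D.rel_x12, D.x01', D.rel_x32, D.x21', D.x20, D.x20',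
        D.x0u hq0, D.x0u' hq0, D.x2u hq0, D.x2u' hq0]
    match_scalars <;>
      (push_cast; try rw [← hs2]; try rw [hts]; field_simp [hs0, hA, hA', hsub0]; try ring)
  · show lam D 0 * D.x 1 - D.x 1 * lam D 0 = (q : ℂ) • (D.Λ * Finv D 1 0)
    simp only [lam, Finv, Fin.mk_zero, Fin.mk_one, Fin.val_zero, Fin.val_one, Fin.val_two,
        smul_mul_assoc, mul_smul_comm, smul_smul, mul_assoc,
        mul_add, add_mul, smul_add, neg_smul, smul_neg, neg_mul, mul_neg, neg_neg,
        mul_one, one_mul, mul_zero, zero_mul, add_zero, zero_add, smul_zero, zero_smul, one_smul,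
        D.rel_xΛ, D.xΛ', D.rel_ρx, D.ρx', D.rel_ux, D.ux1', D.rel_xu, D.x1u',
        D.rel_ρiρ, D.ρiρ', D.rel_ρρi, D.ρρi',
        D.rel_x12, D.x01', D.rel_x32, D.x21', D.x20, D.x20',
        D.x0u hq0, D.x0u' hq0, D.x2u hq0, D.x2u' hq0]
    match_scalars <;>
      (push_cast; try rw [← hs2]; try rw [hts]; field_simp [hs0, hA, hA', hsub0]; try ring)
  · show lam D 0 * D.x 2 - D.x 2 * lam D 0 = (q : ℂ) • (D.Λ * Finv D 2 0)
    simp only [lam, Finv, Fin.mk_zero, Fin.mk_one, Fin.val_zero, Fin.val_one, Fin.val_two,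
        smul_mul_assoc, mul_smul_comm, smul_smul, mul_assoc,
        mul_add, add_mul, smul_add, neg_smul, smul_neg, neg_mul, mul_neg, neg_neg,
        mul_one, one_mul, mul_zero, zero_mul, add_zero, zero_add, smul_zero, zero_smul, one_smul,
        D.rel_xΛ, D.xΛ', D.rel_ρx, D.ρx', D.rel_ux, D.ux1', D.rel_xu, D.x1u',
        D.rel_ρiρ, D.ρiρ', D.rel_ρρi, D.ρρi',
        D.rel_x12, D.x01', D.rel_x32, D.x21', D.x20, D.x20',
        D.x0u hq0, D.x0u' hq0, D.x2u hq0, D.x2u' hq0]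
    match_scalars <;>
      (push_cast; try rw [← hs2]; try rw [hts]; field_simp [hs0, hA, hA', hsub0]; try ring)
  · show lam D 1 * D.x 0 - D.x 0 * lam D 1 = (q : ℂ) • (D.Λ * Finv D 0 1)
    simp only [lam, Finv, Fin.mk_zero, Fin.mk_one, Fin.val_zero, Fin.val_one, Fin.val_two,
        smul_mul_assoc, mul_smul_comm, smul_smul, mul_assoc,
        mul_add, add_mul, smul_add, neg_smul, smul_neg, neg_mul, mul_neg, neg_neg,
        mul_one, one_mul, mul_zero, zero_mul, add_zero, zero_add, smul_zero, zero_smul, one_smul,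
        D.rel_xΛ, D.xΛ', D.rel_ρx, D.ρx', D.rel_ux, D.ux1', D.rel_xu, D.x1u',
        D.rel_ρiρ, D.ρiρ', D.rel_ρρi, D.ρρi',
        D.rel_x12, D.x01', D.rel_x32, D.x21', D.x20, D.x20',
        D.x0u hq0, D.x0u' hq0, D.x2u hq0, D.x2u' hq0]
    match_scalars <;>
      (push_cast; try rw [← hs2]; try rw [hts]; field_simp [hs0, hA, hA', hsub0]; try ring)
  · show lam D 1 * D.x 1 - D.x 1 * lam D 1 = (q : ℂ) • (D.Λ * Finv D 1 1)
    simp only [lam, Finv, Fin.mk_zero, Fin.mk_one, Fin.val_zero, Fin.val_one, Fin.val_two,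
        smul_mul_assoc, mul_smul_comm, smul_smul, mul_assoc,
        mul_add, add_mul, smul_add, neg_smul, smul_neg, neg_mul, mul_neg, neg_neg,
        mul_one, one_mul, mul_zero, zero_mul, add_zero, zero_add, smul_zero, zero_smul, one_smul,
        D.rel_xΛ, D.xΛ', D.rel_ρx, D.ρx', D.rel_ux, D.ux1', D.rel_xu, D.x1u',
        D.rel_ρiρ, D.ρiρ', D.rel_ρρi, D.ρρi',
        D.rel_x12, D.x01', D.rel_x32, D.x21', D.x20, D.x20',
        D.x0u hq0, D.x0u' hq0, D.x2u hq0, D.x2u' hq0]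
    match_scalars <;>
      (push_cast; try rw [← hs2]; try rw [hts]; field_simp [hs0, hA, hA', hsub0]; try ring)
  · show lam D 1 * D.x 2 - D.x 2 * lam D 1 = (q : ℂ) • (D.Λ * Finv D 2 1)
    simp only [lam, Finv, Fin.mk_zero, Fin.mk_one, Fin.val_zero, Fin.val_one, Fin.val_two,
        smul_mul_assoc, mul_smul_comm, smul_smul, mul_assoc,
        mul_add, add_mul, smul_add, neg_smul, smul_neg, neg_mul, mul_neg, neg_neg,
        mul_one, one_mul, mul_zero, zero_mul, add_zero, zero_add, smul_zero, zero_smul, one_smul,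
        D.rel_xΛ, D.xΛ', D.rel_ρx, D.ρx', D.rel_ux, D.ux1', D.rel_xu, D.x1u',
        D.rel_ρiρ, D.ρiρ', D.rel_ρρi, D.ρρi',
        D.rel_x12, D.x01', D.rel_x32, D.x21', D.x20, D.x20',
        D.x0u hq0, D.x0u' hq0, D.x2u hq0, D.x2u' hq0]
    match_scalars <;>
      (push_cast; try rw [← hs2]; try rw [hts]; field_simp [hs0, hA, hA', hsub0]; try ring)
  · show lam D 2 * D.x 0 - D.x 0 * lam D 2 = (q : ℂ) • (D.Λ * Finv D 0 2)
    simp only [lam, Finv, Fin.mk_zero, Fin.mk_one, Fin.val_zero, Fin.val_one, Fin.val_two,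
        smul_mul_assoc, mul_smul_comm, smul_smul, mul_assoc,
        mul_add, add_mul, smul_add, neg_smul, smul_neg, neg_mul, mul_neg, neg_neg,
        mul_one, one_mul, mul_zero, zero_mul, add_zero, zero_add, smul_zero, zero_smul, one_smul,
        D.rel_xΛ, D.xΛ', D.rel_ρx, D.ρx', D.rel_ux, D.ux1', D.rel_xu, D.x1u',
        D.rel_ρiρ, D.ρiρ', D.rel_ρρi, D.ρρi',
        D.rel_x12, D.x01', D.rel_x32, D.x21', D.x20, D.x20',
        D.x0u hq0, D.x0u' hq0, D.x2u hq0, D.x2u' hq0]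
    match_scalars <;>
      (push_cast; try rw [← hs2]; try rw [hts]; field_simp [hs0, hA, hA', hsub0]; try ring)
  · show lam D 2 * D.x 1 - D.x 1 * lam D 2 = (q : ℂ) • (D.Λ * Finv D 1 2)
    simp only [lam, Finv, Fin.mk_zero, Fin.mk_one, Fin.val_zero, Fin.val_one, Fin.val_two,
        smul_mul_assoc, mul_smul_comm, smul_smul, mul_assoc,
        mul_add, add_mul, smul_add, neg_smul, smul_neg, neg_mul, mul_neg, neg_neg,
        mul_one, one_mul, mul_zero, zero_mul, add_zero, zero_add, smul_zero, zero_smul, one_smul,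
        D.rel_xΛ, D.xΛ', D.rel_ρx, D.ρx', D.rel_ux, D.ux1', D.rel_xu, D.x1u',
        D.rel_ρiρ, D.ρiρ', D.rel_ρρi, D.ρρi',
        D.rel_x12, D.x01', D.rel_x32, D.x21', D.x20, D.x20',
        D.x0u hq0, D.x0u' hq0, D.x2u hq0, D.x2u' hq0]
    match_scalars <;>
      (push_cast; try rw [← hs2]; try rw [hts]; field_simp [hs0, hA, hA', hsub0]; try ring)
  · show lam D 2 * D.x 2 - D.x 2 * lam D 2 = (q : ℂ) • (D.Λ * Finv D 2 2)
    rw [show Finv D 2 2 = D.u * (D.ρ * D.ρ) from rfl, D.rel_ρsq]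
    simp only [lam, Finv, Fin.mk_zero, Fin.mk_one, Fin.val_zero, Fin.val_one, Fin.val_two,
        smul_mul_assoc, mul_smul_comm, smul_smul, mul_assoc,
        mul_add, add_mul, smul_add, neg_smul, smul_neg, neg_mul, mul_neg, neg_neg,
        mul_one, one_mul, mul_zero, zero_mul, add_zero, zero_add, smul_zero, zero_smul, one_smul,
        D.rel_xΛ, D.xΛ', D.rel_ρx, D.ρx', D.rel_ux, D.ux1', D.rel_xu, D.x1u',
        D.rel_ρiρ, D.ρiρ', D.rel_ρρi, D.ρρi',
        D.rel_x12, D.x01', D.rel_x32, D.x21', D.x20, D.x20',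
        D.x0u hq0, D.x0u' hq0, D.x2u hq0, D.x2u' hq0]
    match_scalars <;>
      (push_cast; try rw [← hs2]; try rw [hts]; field_simp [hs0, hA, hA', hsub0]; try ring)
end
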